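/- Let k be a field of characteristic zero, Ω the polynomial de Rham complex of the line over k, and Y any cochain complex of k-vector spaces. Form the tensor product complex Y ⊗ Ω, with degree-n component (Y^n ⊗ Ω⁰) ⊕ (Y^{n−1} ⊗ Ω¹) and differential d(y⊗p) = dy⊗p + (−1)^n y⊗p'·dz for y ∈ Y^n, d(y⊗q·dz) = dy⊗q·dz for y ∈ Y^{n−1}. Then the unit chain map u : Y → Y ⊗ Ω, y ↦ y⊗1, is a quasi-isomorphism, and for every a ∈ k the evaluation chain map id_Y ⊗ ev_a : Y ⊗ Ω → Y (sending y⊗p to p(a)·y and y⊗q·dz to 0) is a quasi-isomorphism satisfying (id_Y ⊗ ev_a) ∘ u = id_Y. -/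

import Mathlib

/-!
Integration from `a` contracts the `dz`-direction: since `∫ₐ p' = p - p(a)` and `(∫ₐ q)' = q`
(the antiderivative `Σ cᵢ zⁱ⁺¹/(i+1)` needs characteristic zero), the map
`h(x, w) = ((-1)ⁿ⁻¹ ∫ₐ w, 0)` on `(Y ⊗ Ω)ⁿ` satisfies `dh + hd = id - u ∘ ev_a`.
Together with `ev_a ∘ u = id` this makes `Y` a deformation retract of `Y ⊗ Ω`, and both the
inclusion and the retraction of a deformation retract induce isomorphisms on cohomology.
-/

open Polynomial TensorProduct

/- Cochain complexes of `k`-vector spaces are presented as families `Y : ℤ → Type` of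
`k`-modules together with differentials `dY : ∀ n, Y n →ₗ[k] Y (n+1)` squaring to zero.
The polynomial de Rham complex `Ω` of the line has `Ω⁰ = k[z]` and `Ω¹ = k[z]·dz ≅ k[z]`,
so `(Y ⊗ Ω)ⁿ = (Yⁿ ⊗ k[z]) ⊕ (Yⁿ⁻¹ ⊗ k[z])`. -/

variable {k : Type} [Field k]

/-- Transport along an equality of degrees. -/
def lcast {F : ℤ → Type} [∀ n, AddCommGroup (F n)] [∀ n, Module k (F n)]
    {m n : ℤ} (h : m = n) : F m →ₗ[k] F n := by
  subst h; exact LinearMap.id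

/-- The differential arriving in degree `n` (from degree `n−1`). -/
def dPrev {F : ℤ → Type} [∀ n, AddCommGroup (F n)] [∀ n, Module k (F n)]
    (dF : ∀ n, F n →ₗ[k] F (n+1)) (n : ℤ) : F (n-1) →ₗ[k] F n :=
  (lcast (show n - 1 + 1 = n by ring)).comp (dF (n-1))

/-- A degreewise linear map `φ` between complexes induces an isomorphism on cohomology in
every degree: elementwise, in each degree `n` the induced map on `H^n` (cocycles modulo
coboundaries) is injective and surjective. -/
def InducesCohomologyIso {C D : ℤ → Type}
    [∀ n, AddCommGroup (C n)] [∀ n, Module k (C n)]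
    [∀ n, AddCommGroup (D n)] [∀ n, Module k (D n)]
    (dC : ∀ n, C n →ₗ[k] C (n+1)) (dD : ∀ n, D n →ₗ[k] D (n+1))
    (φ : ∀ n, C n →ₗ[k] D n) : Prop :=
  ∀ n : ℤ,
    (∀ x : C n, dC n x = 0 → (∃ z : D (n-1), φ n x = dPrev dD n z) →
        ∃ w : C (n-1), x = dPrev dC n w) ∧
    (∀ y : D n, dD n y = 0 →
        ∃ x : C n, dC n x = 0 ∧ ∃ z : D (n-1), y - φ n x = dPrev dD n z)

section

variable {Y : ℤ → Type} [∀ n, AddCommGroup (Y n)] [∀ n, Module k (Y n)]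

/-- Degree-`n` component of `Y ⊗ Ω`: `(Yⁿ ⊗ Ω⁰) ⊕ (Yⁿ⁻¹ ⊗ Ω¹)`. -/
abbrev TOmega (k : Type) [Field k] (Y : ℤ → Type)
    [∀ n, AddCommGroup (Y n)] [∀ n, Module k (Y n)] (n : ℤ) : Type :=
  (TensorProduct k (Y n) k[X]) × (TensorProduct k (Y (n-1)) k[X])

/-- The differential of `Y ⊗ Ω`:
`d(y⊗p) = dy⊗p + (−1)ⁿ y⊗p'·dz` for `y ∈ Yⁿ` and `d(y⊗q·dz) = dy⊗q·dz` for `y ∈ Yⁿ⁻¹`. -/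
noncomputable def dTOmega (dY : ∀ n, Y n →ₗ[k] Y (n+1)) (n : ℤ) :
    TOmega k Y n →ₗ[k] TOmega k Y (n+1) :=
  ((TensorProduct.map (dY n) LinearMap.id).comp
      (LinearMap.fst k (TensorProduct k (Y n) k[X]) (TensorProduct k (Y (n-1)) k[X]))).prod
    (((lcast (F := fun m => TensorProduct k (Y m) k[X]) (show n = n + 1 - 1 by ring)).comp
        (((-1 : k) ^ n) • (TensorProduct.map LinearMap.id Polynomial.derivative))).comp
        (LinearMap.fst k (TensorProduct k (Y n) k[X]) (TensorProduct k (Y (n-1)) k[X]))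
      + ((lcast (F := fun m => TensorProduct k (Y m) k[X]) (show n - 1 + 1 = n + 1 - 1 by ring)).comp
          (TensorProduct.map (dY (n-1)) LinearMap.id)).comp
          (LinearMap.snd k (TensorProduct k (Y n) k[X]) (TensorProduct k (Y (n-1)) k[X])))

/-- The unit chain map `u : Y → Y ⊗ Ω`, `y ↦ y ⊗ 1`. -/
noncomputable def uMap (n : ℤ) : Y n →ₗ[k] TOmega k Y n :=
  ((TensorProduct.mk k (Y n) k[X]).flip 1).prod 0

/-- The evaluation chain map `id_Y ⊗ ev_a : Y ⊗ Ω → Y`, sending `y⊗p` to `p(a)·y` and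
`y⊗q·dz` to `0`. -/
noncomputable def evMap (a : k) (n : ℤ) : TOmega k Y n →ₗ[k] Y n :=
  (TensorProduct.lift (((LinearMap.lsmul k (Y n)).comp (Polynomial.leval a)).flip)).comp
    (LinearMap.fst k (TensorProduct k (Y n) k[X]) (TensorProduct k (Y (n-1)) k[X]))

theorem lcast_apply_map {F G : ℤ → Type}
    [∀ n, AddCommGroup (F n)] [∀ n, Module k (F n)]
    [∀ n, AddCommGroup (G n)] [∀ n, Module k (G n)]
    (f : ∀ m, F m →ₗ[k] G m) {m n : ℤ} (h : m = n) (x : F m) :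
    lcast (k := k) h (f m x) = f n (lcast (k := k) h x) := by
  subst h; rfl

theorem lcast_lcast {F : ℤ → Type} [∀ n, AddCommGroup (F n)] [∀ n, Module k (F n)]
    {m n p : ℤ} (h₁ : m = n) (h₂ : n = p) (x : F m) :
    lcast (k := k) (F := F) h₂ (lcast (k := k) h₁ x) = lcast (k := k) (h₁.trans h₂) x := by
  subst h₁ h₂; rfl

theorem lcast_rfl {F : ℤ → Type} [∀ n, AddCommGroup (F n)] [∀ n, Module k (F n)]
    {n : ℤ} (h : n = n) (x : F n) : lcast (k := k) (F := F) h x = x := rfl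

section DeformationRetract

variable {C D : ℤ → Type} [∀ n, AddCommGroup (C n)] [∀ n, Module k (C n)]
  [∀ n, AddCommGroup (D n)] [∀ n, Module k (D n)]
  {dC : ∀ n, C n →ₗ[k] C (n+1)} {dD : ∀ n, D n →ₗ[k] D (n+1)}

def IsChainMap (dC : ∀ n, C n →ₗ[k] C (n+1)) (dD : ∀ n, D n →ₗ[k] D (n+1))
    (φ : ∀ n, C n →ₗ[k] D n) : Prop :=
  ∀ n x, dD n (φ n x) = φ (n+1) (dC n x)

theorem IsChainMap.dPrev_apply {φ : ∀ n, C n →ₗ[k] D n} (hφ : IsChainMap dC dD φ)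
    (n : ℤ) (x : C (n-1)) : dPrev dD n (φ (n-1) x) = φ n (dPrev dC n x) := by
  simp only [dPrev, LinearMap.comp_apply]
  rw [hφ, lcast_apply_map φ]

structure IsDeformationRetract (dC : ∀ n, C n →ₗ[k] C (n+1)) (dD : ∀ n, D n →ₗ[k] D (n+1))
    (φ : ∀ n, C n →ₗ[k] D n) (ψ : ∀ n, D n →ₗ[k] C n) (h : ∀ n, D n →ₗ[k] D (n-1)) :
    Prop where
  isChainMap_incl : IsChainMap dC dD φ
  isChainMap_retr : IsChainMap dD dC ψ
  retr_incl : ∀ n x, ψ n (φ n x) = x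
  homotopy : ∀ n y,
    dPrev dD n (h n y) + lcast (k := k) (show n + 1 - 1 = n by ring) (h (n+1) (dD n y))
      = y - φ n (ψ n y)

namespace IsDeformationRetract

variable {φ : ∀ n, C n →ₗ[k] D n} {ψ : ∀ n, D n →ₗ[k] C n} {h : ∀ n, D n →ₗ[k] D (n-1)}

theorem homotopy_of_cocycle (H : IsDeformationRetract dC dD φ ψ h) {n : ℤ} {y : D n}
    (hy : dD n y = 0) : dPrev dD n (h n y) = y - φ n (ψ n y) := by
  simpa [hy] using H.homotopy n y

theorem inducesCohomologyIso_incl (H : IsDeformationRetract dC dD φ ψ h) :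
    InducesCohomologyIso dC dD φ := by
  refine fun n => ⟨fun x _ ⟨z, hz⟩ => ⟨ψ (n-1) z, ?_⟩, fun y hy => ⟨ψ n y, ?_, h n y, ?_⟩⟩
  · rw [H.isChainMap_retr.dPrev_apply, ← hz, H.retr_incl]
  · rw [H.isChainMap_retr, hy, map_zero]
  · rw [H.homotopy_of_cocycle hy]

theorem inducesCohomologyIso_retr (H : IsDeformationRetract dC dD φ ψ h) :
    InducesCohomologyIso dD dC ψ := by
  refine fun n => ⟨fun y hy ⟨z, hz⟩ => ⟨φ (n-1) z + h n y, ?_⟩,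
    fun x hx => ⟨φ n x, ?_, 0, ?_⟩⟩
  · rw [map_add, H.homotopy_of_cocycle hy, H.isChainMap_incl.dPrev_apply, ← hz]
    abel
  · rw [H.isChainMap_incl, hx, map_zero]
  · rw [H.retr_incl, sub_self, map_zero]

end IsDeformationRetract

end DeformationRetract

noncomputable def antideriv : k[X] →ₗ[k] k[X] :=
  Polynomial.lsum fun i => ((i + 1 : k)⁻¹) • monomial (i + 1)

theorem derivative_antideriv [CharZero k] (p : k[X]) : derivative (antideriv p) = p := by
  induction p using Polynomial.induction_on' with
  | add p q hp hq => rw [map_add, derivative_add, hp, hq]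
  | monomial n c =>
    have hn : (n + 1 : k) ≠ 0 := Nat.cast_add_one_ne_zero n
    simp only [antideriv, lsum_apply, LinearMap.smul_apply, smul_monomial, smul_eq_mul, mul_zero,
      monomial_zero_right, sum_monomial_index, derivative_monomial_succ]
    rw [mul_right_comm, inv_mul_cancel₀ hn, one_mul]

noncomputable def integralFrom (a : k) : k[X] →ₗ[k] k[X] :=
  antideriv - (Algebra.linearMap k k[X]).comp ((leval a).comp antideriv)

theorem derivative_integralFrom [CharZero k] (a : k) (p : k[X]) :
    derivative (integralFrom a p) = p := by
  simp [integralFrom, derivative_antideriv]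

theorem eval_integralFrom (a : k) (p : k[X]) : (integralFrom a p).eval a = 0 := by
  simp [integralFrom]

theorem integralFrom_derivative [CharZero k] (a : k) (p : k[X]) :
    integralFrom a (derivative p) = p - C (p.eval a) := by
  set q := integralFrom a (derivative p) - (p - C (p.eval a))
  have hq' : derivative q = 0 := by simp [q, derivative_integralFrom]
  have hqa : q.eval a = 0 := by simp [q, eval_integralFrom]
  have hq : q = 0 := by
    rw [eq_C_of_derivative_eq_zero hq'] at hqa ⊢
    simpa using hqa
  exact sub_eq_zero.mp hq

theorem neg_one_zpow_mul_self {K : Type*} [DivisionRing K] (m : ℤ) :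
    (-1 : K) ^ m * (-1) ^ m = 1 := by
  rw [← (Commute.neg_one_left (-1 : K)).mul_zpow, neg_one_mul, neg_neg, one_zpow]

theorem neg_one_zpow_sub_one {K : Type*} [DivisionRing K] (m : ℤ) :
    (-1 : K) ^ (m - 1) = -(-1) ^ m := by
  rw [zpow_sub_one₀ (neg_ne_zero.2 one_ne_zero), inv_neg, inv_one, mul_neg_one]

section TensorPolynomial

variable {M N : Type*} [AddCommGroup M] [Module k M] [AddCommGroup N] [Module k N]

noncomputable def evalTensor (a : k) : M ⊗[k] k[X] →ₗ[k] M :=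
  TensorProduct.lift ((LinearMap.lsmul k M).comp (leval a)).flip

@[simp]
theorem evalTensor_tmul (a : k) (y : M) (p : k[X]) : evalTensor a (y ⊗ₜ p) = p.eval a • y :=
  rfl

theorem evalTensor_rTensor (a : k) (f : M →ₗ[k] N) (x : M ⊗[k] k[X]) :
    evalTensor a (f.rTensor k[X] x) = f (evalTensor a x) := by
  induction x using TensorProduct.induction_on with
  | zero => simp
  | tmul y p => simp
  | add x x' hx hx' => simp only [map_add, hx, hx']

theorem lTensor_derivative_lTensor_integralFrom [CharZero k] (a : k) (x : M ⊗[k] k[X]) :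
    (derivative : k[X] →ₗ[k] k[X]).lTensor M ((integralFrom a).lTensor M x) = x := by
  have h : derivative ∘ₗ integralFrom a = LinearMap.id :=
    LinearMap.ext (derivative_integralFrom a)
  rw [← LinearMap.lTensor_comp_apply, h, LinearMap.lTensor_id, LinearMap.id_apply]

theorem lTensor_integralFrom_lTensor_derivative [CharZero k] (a : k) (x : M ⊗[k] k[X]) :
    (integralFrom a).lTensor M ((derivative : k[X] →ₗ[k] k[X]).lTensor M x)
      = x - evalTensor a x ⊗ₜ 1 := by
  induction x using TensorProduct.induction_on with
  | zero => simp
  | tmul y p =>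
    simp only [LinearMap.lTensor_tmul, integralFrom_derivative, tmul_sub, evalTensor_tmul]
    rw [smul_tmul, smul_eq_C_mul, mul_one]
  | add x x' hx hx' =>
    simp only [map_add, hx, hx', add_tmul]
    abel

end TensorPolynomial

section TensorOmega

variable (dY : ∀ n, Y n →ₗ[k] Y (n+1))

local notation "YX" => fun m : ℤ => Y m ⊗[k] k[X]

theorem lcast_fst {m n : ℤ} (h : m = n) (v : TOmega k Y m) :
    (lcast (k := k) (F := TOmega k Y) h v).1 = lcast (k := k) (F := YX) h v.1 := by
  subst h; rfl

theorem lcast_snd {m n : ℤ} (h : m = n) (v : TOmega k Y m) :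
    (lcast (k := k) (F := TOmega k Y) h v).2 = lcast (k := k) (F := YX) (by rw [h]) v.2 := by
  subst h; rfl

theorem dTOmega_fst (n : ℤ) (v : TOmega k Y n) :
    (dTOmega dY n v).1 = (dY n).rTensor k[X] v.1 := rfl

theorem dTOmega_snd (n : ℤ) (v : TOmega k Y n) :
    (dTOmega dY n v).2
      = lcast (k := k) (F := YX) (show n = n + 1 - 1 by ring)
          ((-1 : k) ^ n • derivative.lTensor (Y n) v.1)
        + lcast (k := k) (F := YX) (show n - 1 + 1 = n + 1 - 1 by ring)
          ((dY (n-1)).rTensor k[X] v.2) :=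
  rfl

theorem uMap_apply (n : ℤ) (y : Y n) : uMap (k := k) n y = (y ⊗ₜ 1, 0) := rfl

theorem evMap_apply (a : k) (n : ℤ) (v : TOmega k Y n) : evMap a n v = evalTensor a v.1 := rfl

theorem uMap_isChainMap : IsChainMap dY (dTOmega dY) uMap := by
  intro n y
  ext
  · simp [dTOmega_fst, uMap_apply]
  · simp [dTOmega_snd, uMap_apply]

theorem evMap_isChainMap (a : k) : IsChainMap (dTOmega dY) dY (evMap a) := by
  intro n v
  rw [evMap_apply, evMap_apply, dTOmega_fst, evalTensor_rTensor]

theorem evMap_uMap (a : k) (n : ℤ) (y : Y n) : evMap a n (uMap n y) = y := by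
  simp [evMap_apply, uMap_apply]

noncomputable def homotopyTOmega (a : k) (n : ℤ) : TOmega k Y n →ₗ[k] TOmega k Y (n-1) :=
  (((-1 : k) ^ (n-1) • (integralFrom a).lTensor (Y (n-1))) ∘ₗ LinearMap.snd k _ _).prod 0

theorem homotopyTOmega_apply (a : k) (n : ℤ) (v : TOmega k Y n) :
    homotopyTOmega a n v = ((-1 : k) ^ (n-1) • (integralFrom a).lTensor (Y (n-1)) v.2, 0) :=
  rfl

theorem isDeformationRetract_uMap_evMap [CharZero k] (a : k) :
    IsDeformationRetract dY (dTOmega dY) uMap (evMap a) (homotopyTOmega a) where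
  isChainMap_incl := uMap_isChainMap dY
  isChainMap_retr := evMap_isChainMap dY a
  retr_incl := evMap_uMap a
  homotopy n v := by
    obtain ⟨x, w⟩ := v
    ext
    · simp only [dPrev, LinearMap.comp_apply, Prod.fst_add, Prod.fst_sub, lcast_fst,
        homotopyTOmega_apply, dTOmega_fst, dTOmega_snd, uMap_apply, evMap_apply, map_add, map_smul]
      simp only [← lcast_apply_map (fun m => (integralFrom a).lTensor (Y m)), lcast_lcast, lcast_rfl]
      have hcomm : (integralFrom a).lTensor (Y (n-1+1)) ((dY (n-1)).rTensor k[X] w)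
          = (dY (n-1)).rTensor k[X] ((integralFrom a).lTensor (Y (n-1)) w) := by
        rw [← LinearMap.comp_apply, LinearMap.lTensor_comp_rTensor,
          ← LinearMap.rTensor_comp_lTensor, LinearMap.comp_apply]
      rw [hcomm, show (-1 : k) ^ (n + 1 - 1) = (-1) ^ n by rw [add_sub_cancel_right], smul_add,
        smul_smul, neg_one_zpow_mul_self, one_smul, lTensor_integralFrom_lTensor_derivative,
        neg_one_zpow_sub_one]
      module
    · simp only [dPrev, LinearMap.comp_apply, Prod.snd_add, Prod.snd_sub, lcast_snd,
        homotopyTOmega_apply, dTOmega_snd, uMap_apply, map_add, map_smul, map_zero, lcast_lcast,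
        lcast_rfl]
      rw [smul_smul, neg_one_zpow_mul_self, one_smul, lTensor_derivative_lTensor_integralFrom,
        add_zero, add_zero, sub_zero]

end TensorOmega

theorem unit_and_evaluation_quasi_iso_general
    [CharZero k]
    (dY : ∀ n, Y n →ₗ[k] Y (n+1)) :
    (∀ n (y : Y n), dTOmega dY n (uMap n y) = uMap (n+1) (dY n y)) ∧
    InducesCohomologyIso dY (dTOmega dY) (fun n => uMap n) ∧
    (∀ a : k,
      (∀ n (w : TOmega k Y n), dY n (evMap a n w) = evMap a (n+1) (dTOmega dY n w)) ∧
      InducesCohomologyIso (dTOmega dY) dY (fun n => evMap a n) ∧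
      (∀ n (y : Y n), evMap a n (uMap n y) = y)) := by
  have retract := isDeformationRetract_uMap_evMap dY
  exact ⟨uMap_isChainMap dY, (retract 0).inducesCohomologyIso_incl,
    fun a => ⟨evMap_isChainMap dY a, (retract a).inducesCohomologyIso_retr, evMap_uMap a⟩⟩

/-- Let `k` be a field of characteristic zero, `Ω` the polynomial de Rham
complex of the line and `Y` any cochain complex of `k`-vector spaces.  Then the unit map
`u : Y → Y ⊗ Ω`, `y ↦ y ⊗ 1`, is a chain map and a quasi-isomorphism, and for every
`a ∈ k` the evaluation map `id_Y ⊗ ev_a : Y ⊗ Ω → Y` is a chain map and a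
quasi-isomorphism satisfying `(id_Y ⊗ ev_a) ∘ u = id_Y`. -/
theorem unit_and_evaluation_quasi_iso
    [CharZero k]
    (dY : ∀ n, Y n →ₗ[k] Y (n+1))
    (hdY : ∀ n (y : Y n), dY (n+1) (dY n y) = 0) :
    (∀ n (y : Y n), dTOmega dY n (uMap n y) = uMap (n+1) (dY n y)) ∧
    InducesCohomologyIso dY (dTOmega dY) (fun n => uMap n) ∧
    (∀ a : k,
      (∀ n (w : TOmega k Y n), dY n (evMap a n w) = evMap a (n+1) (dTOmega dY n w)) ∧
      InducesCohomologyIso (dTOmega dY) dY (fun n => evMap a n) ∧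
      (∀ n (y : Y n), evMap a n (uMap n y) = y)) :=
  unit_and_evaluation_quasi_iso_general dY

end
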